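/- (Gradient dominates the optimality gap near a stationary point with quadratic decay.) Let σ̄ ∈ M_r be a stationary point at which f satisfies quadratic decay with constant μ > 0. Let u ∈ T_σ̄ M_r with ‖u‖_F = 1 and u Frobenius-orthogonal to V_σ̄, and let 0 ≤ t ≤ 1. Then ‖grad f(σ̄(t))‖_F² ≥ (μ/n) (f(σ̄) − f(σ̄(t))) − t³ ‖A‖₁ (3μ + 88 n ‖A‖₁). -/

import Mathlib

open scoped BigOperators RealInnerProductSpace
open Finset Matrix

noncomputable section

/-- Points on the sphere live in Euclidean space `ℝ^r`. -/
abbrev Pt (r : ℕ) := EuclideanSpace ℝ (Fin r)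

/-- A configuration: `n` rows, each a vector in `ℝ^r`. -/
abbrev Conf (n r : ℕ) := Fin n → Pt r

/-- Membership in the manifold `M_r`: all rows are unit vectors. -/
def inM {n r : ℕ} (σ : Conf n r) : Prop := ∀ i, ‖σ i‖ = 1

/-- `g_i(σ) = ∑_{j ≠ i} A_{ij} σ_j`. -/
def gvec {n r : ℕ} (A : Matrix (Fin n) (Fin n) ℝ) (σ : Conf n r) (i : Fin n) : Pt r :=
  ∑ j ∈ univ.erase i, A i j • σ j

/-- The objective `f(σ) = ⟨A, σσᵀ⟩ = ∑_{i,j} A_{ij} ⟨σ_i, σ_j⟩`. -/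
def fval {n r : ℕ} (A : Matrix (Fin n) (Fin n) ℝ) (σ : Conf n r) : ℝ :=
  ∑ i, ∑ j, A i j * ⟪σ i, σ j⟫

/-- The BCM update `T_i(σ)`: replace row `i` by `g_i(σ)/‖g_i(σ)‖`
    (unchanged if `g_i(σ) = 0`). -/
def Tupd {n r : ℕ} (A : Matrix (Fin n) (Fin n) ℝ) (σ : Conf n r) (i : Fin n) : Conf n r :=
  letI := Classical.dec (gvec A σ i = 0)
  Function.update σ i (if gvec A σ i = 0 then σ i else ‖gvec A σ i‖⁻¹ • gvec A σ i)

/-- `‖A‖₁ = max_j ∑_i |A_{ij}|`. -/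
def Anorm1 {n : ℕ} (A : Matrix (Fin n) (Fin n) ℝ) : ℝ := ⨆ j, ∑ i, |A i j|

/-- `‖A‖_{1,1} = ∑_{i,j} |A_{ij}|`. -/
def Anorm11 {n : ℕ} (A : Matrix (Fin n) (Fin n) ℝ) : ℝ := ∑ i, ∑ j, |A i j|

/-- Squared Riemannian gradient norm
    `‖grad f(σ)‖_F² = 2 ∑_i (‖g_i‖² − ⟨σ_i, g_i⟩²)`. -/
def gradNormSq {n r : ℕ} (A : Matrix (Fin n) (Fin n) ℝ) (σ : Conf n r) : ℝ :=
  2 * ∑ i, (‖gvec A σ i‖ ^ 2 - ⟪σ i, gvec A σ i⟫ ^ 2)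

/-- The geodesic through `σ` in direction `u`, at time `t`:
    `σ_i(t) = σ_i cos(‖u_i‖ t) + (u_i/‖u_i‖) sin(‖u_i‖ t)` (rows with `u_i = 0` stay fixed). -/
def geo {n r : ℕ} (σ u : Conf n r) (t : ℝ) : Conf n r :=
  fun i => Real.cos (‖u i‖ * t) • σ i + (Real.sin (‖u i‖ * t) / ‖u i‖) • u i

/-- Tangency: `u ∈ T_σ M_r` iff every row of `u` is orthogonal to the
    corresponding row of `σ`. -/
def tangent {n r : ℕ} (σ u : Conf n r) : Prop := ∀ i, ⟪u i, σ i⟫ = 0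

/-- Squared Frobenius norm `‖u‖_F² = ∑_i ‖u_i‖²`. -/
def fnormSq {n r : ℕ} (u : Conf n r) : ℝ := ∑ i, ‖u i‖ ^ 2

/-- Riemannian gradient pairing `G_σ(u) = 2 ∑_i ⟨u_i, g_i(σ)⟩`. -/
def Gform {n r : ℕ} (A : Matrix (Fin n) (Fin n) ℝ) (σ u : Conf n r) : ℝ :=
  2 * ∑ i, ⟪u i, gvec A σ i⟫

/-- Riemannian Hessian quadratic form
    `H_σ(u) = 2 ∑_i (⟨u_i, v_i⟩ − ‖u_i‖² ⟨σ_i, g_i(σ)⟩)` with `v_i = ∑_{j≠i} A_{ij} u_j`. -/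
def Hform {n r : ℕ} (A : Matrix (Fin n) (Fin n) ℝ) (σ u : Conf n r) : ℝ :=
  2 * ∑ i, (⟪u i, gvec A u i⟫ - ‖u i‖ ^ 2 * ⟪σ i, gvec A σ i⟫)

/-- Stationary point: `g_i(σ) ≠ 0` and `σ_i = g_i(σ)/‖g_i(σ)‖` for all `i`. -/
def stationary {n r : ℕ} (A : Matrix (Fin n) (Fin n) ℝ) (σ : Conf n r) : Prop :=
  ∀ i, gvec A σ i ≠ 0 ∧ σ i = ‖gvec A σ i‖⁻¹ • gvec A σ i

/-- `w ∈ V_σ = {σB : Bᵀ = −B}` (rows of `σB` given by `(σB)_{ik} = ∑_l σ_{il} B_{lk}`). -/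
def inV {n r : ℕ} (σ w : Conf n r) : Prop :=
  ∃ B : Matrix (Fin r) (Fin r) ℝ, Bᵀ = -B ∧ ∀ i k, w i k = ∑ l, σ i l * B l k

/-- Frobenius-orthogonality of `u` to the subspace `V_σ`. -/
def perpV {n r : ℕ} (σ u : Conf n r) : Prop :=
  ∀ w : Conf n r, inV σ w → ∑ i, ⟪u i, w i⟫ = 0

/-- `f` satisfies quadratic decay at `σ` with constant `μ`:
    `H_σ(u) ≤ −μ ‖u‖_F²` for all tangent `u` Frobenius-orthogonal to `V_σ`. -/
def quadDecay {n r : ℕ} (A : Matrix (Fin n) (Fin n) ℝ) (σ : Conf n r) (μ : ℝ) : Prop :=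
  ∀ u : Conf n r, tangent σ u → perpV σ u → Hform A σ u ≤ -μ * fnormSq u

/-- Geodesic distance `dist(σ, σ') = (∑_i arccos⟨σ_i, σ'_i⟩²)^{1/2}`. -/
def gdist {n r : ℕ} (σ σ' : Conf n r) : ℝ :=
  Real.sqrt (∑ i, Real.arccos ⟪σ i, σ' i⟫ ^ 2)

/-- Right-multiplication of a configuration by a matrix `Q ∈ ℝ^{r×r}` (rowwise). -/
def rowMulQ {n r : ℕ} (σ : Conf n r) (Q : Matrix (Fin r) (Fin r) ℝ) : Conf n r :=
  fun i => (EuclideanSpace.equiv (Fin r) ℝ).symm (fun k => ∑ l, σ i l * Q l k)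

/-- Distance to the equivalence class `[σ'] = {σ'Q : Q ∈ O(r)}`. -/
def distClass {n r : ℕ} (σ σ' : Conf n r) : ℝ :=
  ⨅ Q : {Q : Matrix (Fin r) (Fin r) ℝ // Qᵀ * Q = 1}, gdist σ (rowMulQ σ' Q.1)

/-- `f* = sup_{σ ∈ M_r} f(σ)`. -/
def fstar {n r : ℕ} (A : Matrix (Fin n) (Fin n) ℝ) : ℝ :=
  sSup (fval A '' {σ : Conf n r | inM σ})

/-- The optimal value of the SDP with unit-diagonal constraints. -/
def SDPval {n : ℕ} (A : Matrix (Fin n) (Fin n) ℝ) : ℝ :=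
  sSup {y | ∃ X : Matrix (Fin n) (Fin n) ℝ, X.PosSemidef ∧ (∀ i, X i i = 1) ∧
    y = ∑ i, ∑ j, A i j * X i j}

/-- BCM iterates along a sequence of coordinates `ω`. -/
def iterSeq {n r : ℕ} (A : Matrix (Fin n) (Fin n) ℝ) (σ0 : Conf n r) (ω : ℕ → Fin n) :
    ℕ → Conf n r
  | 0 => σ0
  | k + 1 => Tupd A (iterSeq A σ0 ω k) (ω k)

/-- The set of rows where `u` is nonzero. -/
def suppu {n r : ℕ} (u : Conf n r) : Finset (Fin n) :=
  letI := Classical.decPred (fun i : Fin n => u i ≠ 0)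
  Finset.univ.filter (fun i : Fin n => u i ≠ 0)



/-!
Write `B = pairing A`, so that `f(σ) = B(σ, σ)`, and `b = -H_σ̄(u)/2 ≥ μ/2`.
Along the geodesic, `σ(t) = σ̄ + t u + w` with `‖w_i‖ ≤ ‖u_i‖² t²`, and the velocity `σ'(t)` is
`u + δ` with `‖δ_i‖ ≤ 2 ‖u_i‖² t`. Stationarity (`g_i(σ̄) = ‖g_i(σ̄)‖ σ̄_i`) makes every pairing
with `σ̄` a row-wise scalar, so expanding `B` gives `f(σ̄) - f(σ(t)) ≤ b t² + 3 ‖A‖₁ t³` and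
`∑ᵢ ⟪σ_i'(t), g_i(σ(t))⟫ = -b t + O(‖A‖₁ t²)`. Since `σ'(t)` is tangent at `σ(t)` with unit
Frobenius norm, Cauchy–Schwarz bounds twice the square of this directional derivative by
`‖grad f(σ(t))‖²`, which is therefore `≥ 2 b² t² - O(t³) ≥ μ (f(σ̄) - f(σ(t))) - O(t³)`.
-/

open Real

variable {n r : ℕ}

def pairing (A : Matrix (Fin n) (Fin n) ℝ) : LinearMap.BilinForm ℝ (Conf n r) :=
  LinearMap.mk₂ ℝ (fun p q => ∑ i, ∑ j, A i j * ⟪p i, q j⟫)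
    (fun p p' q => by simp only [Pi.add_apply, inner_add_left, mul_add, sum_add_distrib])
    (fun c p q => by
      simp only [Pi.smul_apply, real_inner_smul_left, smul_eq_mul, mul_sum, mul_left_comm])
    (fun p q q' => by simp only [Pi.add_apply, inner_add_right, mul_add, sum_add_distrib])
    (fun c p q => by
      simp only [Pi.smul_apply, real_inner_smul_right, smul_eq_mul, mul_sum, mul_left_comm])

theorem fval_eq_pairing (A : Matrix (Fin n) (Fin n) ℝ) (σ : Conf n r) :
    fval A σ = pairing A σ σ := rfl

theorem pairing_comm {A : Matrix (Fin n) (Fin n) ℝ} (hA : A.IsSymm) (p q : Conf n r) :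
    pairing A p q = pairing A q p := by
  simp only [pairing, LinearMap.mk₂_apply]
  rw [sum_comm]
  exact sum_congr rfl fun i _ => sum_congr rfl fun j _ => by rw [hA.apply, real_inner_comm]

theorem sum_inner_gvec {A : Matrix (Fin n) (Fin n) ℝ} (hdiag : ∀ i, A i i = 0)
    (p q : Conf n r) : ∑ i, ⟪p i, gvec A q i⟫ = pairing A p q := by
  simp only [pairing, LinearMap.mk₂_apply, gvec]
  refine sum_congr rfl fun i _ => ?_
  simp only [inner_sum, real_inner_smul_right]
  exact sum_erase _ (by rw [hdiag i, zero_mul])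

theorem abs_pairing_le {A : Matrix (Fin n) (Fin n) ℝ} {a Y : ℝ}
    (hrow : ∀ i, ∑ j, |A i j| ≤ a) {p q : Conf n r} (hq : ∀ j, ‖q j‖ ≤ Y) :
    |pairing A p q| ≤ a * Y * ∑ i, ‖p i‖ := by
  simp only [pairing, LinearMap.mk₂_apply, mul_sum]
  refine (abs_sum_le_sum_abs _ _).trans (sum_le_sum fun i _ => ?_)
  have hY : 0 ≤ Y := (norm_nonneg _).trans (hq i)
  calc |∑ j, A i j * ⟪p i, q j⟫| ≤ ∑ j, |A i j| * (‖p i‖ * Y) := by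
        refine (abs_sum_le_sum_abs _ _).trans (sum_le_sum fun j _ => ?_)
        rw [abs_mul]
        gcongr
        exact (abs_real_inner_le_norm _ _).trans (by gcongr; exact hq j)
    _ = (∑ j, |A i j|) * (‖p i‖ * Y) := by rw [sum_mul]
    _ ≤ a * Y * ‖p i‖ := by nlinarith [hrow i, norm_nonneg (p i), mul_nonneg (norm_nonneg (p i)) hY]

theorem norm_gvec_le (A : Matrix (Fin n) (Fin n) ℝ) (q : Conf n r) (i : Fin n) :
    ‖gvec A q i‖ ≤ ∑ j, |A i j| * ‖q j‖ := by
  refine (norm_sum_le _ _).trans ?_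
  simp only [norm_smul, Real.norm_eq_abs]
  exact sum_le_sum_of_subset_of_nonneg (erase_subset _ _) fun _ _ _ => by positivity

theorem sum_abs_le_Anorm1 {A : Matrix (Fin n) (Fin n) ℝ} (hA : A.IsSymm) (i : Fin n) :
    ∑ j, |A i j| ≤ Anorm1 A := by
  calc ∑ j, |A i j| = ∑ j, |A j i| := sum_congr rfl fun j _ => by rw [hA.apply]
    _ ≤ Anorm1 A := le_ciSup (f := fun i => ∑ j, |A j i|) (Set.finite_range _).bddAbove i

theorem Anorm1_nonneg (A : Matrix (Fin n) (Fin n) ℝ) : 0 ≤ Anorm1 A :=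
  Real.iSup_nonneg fun _ => Finset.sum_nonneg fun _ _ => abs_nonneg _

-- The velocity `d/dt (geo σ u t)`.
def geoVel (σ u : Conf n r) (t : ℝ) : Conf n r :=
  fun i => (-(‖u i‖ * sin (‖u i‖ * t))) • σ i + cos (‖u i‖ * t) • u i

section Plane

variable {s v : Pt r}

theorem inner_smul_add_smul (hs : ‖s‖ = 1) (hv : ⟪v, s⟫ = 0) (a b c d : ℝ) :
    ⟪a • s + b • v, c • s + d • v⟫ = a * c + b * d * ‖v‖ ^ 2 := by
  have hv' : ⟪s, v⟫ = 0 := by rw [real_inner_comm, hv]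
  simp only [inner_add_left, inner_add_right, real_inner_smul_left, real_inner_smul_right,
    real_inner_self_eq_norm_sq, hs, hv, hv']
  ring

theorem norm_smul_add_smul_le (hs : ‖s‖ = 1) (a b : ℝ) :
    ‖a • s + b • v‖ ≤ |a| + |b| * ‖v‖ := by
  refine (norm_add_le _ _).trans ?_
  rw [norm_smul, norm_smul, hs, Real.norm_eq_abs, Real.norm_eq_abs, mul_one]

end Plane

section Geodesic

variable {σ u : Conf n r}

theorem inM_geo (hσ : inM σ) (hu : tangent σ u) (t : ℝ) : inM (geo σ u t) := by
  intro i
  rcases eq_or_ne (u i) 0 with h | h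
  · simp [geo, h, hσ i]
  have hθ : ‖u i‖ ≠ 0 := norm_ne_zero_iff.mpr h
  rw [← sq_eq_sq₀ (norm_nonneg _) zero_le_one, ← real_inner_self_eq_norm_sq, geo,
    inner_smul_add_smul (hσ i) (hu i)]
  field_simp
  linear_combination sin_sq_add_cos_sq (‖u i‖ * t)

theorem tangent_geoVel (hσ : inM σ) (hu : tangent σ u) (t : ℝ) :
    tangent (geo σ u t) (geoVel σ u t) := by
  intro i
  rcases eq_or_ne (u i) 0 with h | h
  · simp [geoVel, h]
  have hθ : ‖u i‖ ≠ 0 := norm_ne_zero_iff.mpr h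
  rw [geo, geoVel, inner_smul_add_smul (hσ i) (hu i)]
  field_simp
  ring

theorem norm_geoVel (hσ : inM σ) (hu : tangent σ u) (t : ℝ) (i : Fin n) :
    ‖geoVel σ u t i‖ = ‖u i‖ := by
  rw [← sq_eq_sq₀ (norm_nonneg _) (norm_nonneg _), ← real_inner_self_eq_norm_sq, geoVel,
    inner_smul_add_smul (hσ i) (hu i)]
  linear_combination ‖u i‖ ^ 2 * sin_sq_add_cos_sq (‖u i‖ * t)

theorem fnormSq_geoVel (hσ : inM σ) (hu : tangent σ u) (t : ℝ) :
    fnormSq (geoVel σ u t) = fnormSq u := by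
  simp only [fnormSq, norm_geoVel hσ hu]

theorem inner_geo_sub_self (hσ : inM σ) (hu : tangent σ u) (t : ℝ) (i : Fin n) :
    ⟪geo σ u t i - σ i - t • u i, σ i⟫ = cos (‖u i‖ * t) - 1 := by
  simp only [geo, inner_sub_left, inner_add_left, real_inner_smul_left,
    real_inner_self_eq_norm_sq, hσ i, hu i]
  ring

theorem inner_geoVel_self (hσ : inM σ) (hu : tangent σ u) (t : ℝ) (i : Fin n) :
    ⟪geoVel σ u t i, σ i⟫ = -(‖u i‖ * sin (‖u i‖ * t)) := by
  simp only [geoVel, inner_add_left, real_inner_smul_left, real_inner_self_eq_norm_sq,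
    hσ i, hu i]
  ring

theorem norm_geo_sub_le (hσ : inM σ) (i : Fin n) (hui : ‖u i‖ ≤ 1) {t : ℝ}
    (ht0 : 0 ≤ t) (ht1 : t ≤ 1) :
    ‖geo σ u t i - σ i - t • u i‖ ≤ ‖u i‖ ^ 2 * t ^ 2 := by
  rcases eq_or_ne (u i) 0 with h | h
  · simp [geo, h]
  have hθ : 0 < ‖u i‖ := norm_pos_iff.mpr h
  set x := ‖u i‖ * t with hx
  have hx0 : 0 ≤ x := by positivity
  have hx1 : x ≤ 1 := mul_le_one₀ hui ht0 ht1
  have hw : geo σ u t i - σ i - t • u i = (cos x - 1) • σ i + ((sin x - x) / ‖u i‖) • u i := by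
    have hcoef : (sin x - x) / ‖u i‖ = sin x / ‖u i‖ - t := by
      rw [hx]; field_simp
    rw [hcoef]
    simp only [geo]
    module
  rw [hw]
  refine (norm_smul_add_smul_le (hσ i) _ _).trans ?_
  rw [abs_div, abs_of_pos hθ, div_mul_cancel₀ _ hθ.ne', abs_of_nonpos (by linarith [cos_le_one x]),
    abs_of_nonpos (by linarith [sin_le hx0])]
  nlinarith [one_sub_sq_div_two_le_cos (x := x), sin_ge_sub_cube hx0,
    pow_le_pow_of_le_one hx0 hx1 (show 2 ≤ 3 by norm_num)]

theorem norm_geoVel_sub_le (hσ : inM σ) (i : Fin n) (hui : ‖u i‖ ≤ 1) {t : ℝ}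
    (ht0 : 0 ≤ t) (ht1 : t ≤ 1) :
    ‖geoVel σ u t i - u i‖ ≤ 2 * ‖u i‖ ^ 2 * t := by
  set x := ‖u i‖ * t with hx
  have hx0 : 0 ≤ x := by positivity
  have hx1 : x ≤ 1 := mul_le_one₀ hui ht0 ht1
  have hd : geoVel σ u t i - u i = (-(‖u i‖ * sin x)) • σ i + (cos x - 1) • u i := by
    simp only [geoVel]
    module
  rw [hd]
  refine (norm_smul_add_smul_le (hσ i) _ _).trans ?_
  rw [abs_neg, abs_mul, abs_of_nonneg (norm_nonneg (u i)),
    abs_of_nonpos (a := cos x - 1) (by linarith [cos_le_one x])]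
  have hsin : ‖u i‖ * |sin x| ≤ ‖u i‖ * x :=
    mul_le_mul_of_nonneg_left (abs_sin_le_abs.trans (abs_of_nonneg hx0).le) (norm_nonneg _)
  have hcos : (1 - cos x) * ‖u i‖ ≤ x * ‖u i‖ := by
    refine mul_le_mul_of_nonneg_right ?_ (norm_nonneg _)
    nlinarith [one_sub_sq_div_two_le_cos (x := x)]
  have hθx : ‖u i‖ * x = ‖u i‖ ^ 2 * t := by rw [hx]; ring
  linarith

end Geodesic

theorem sq_inner_le_of_inner_eq_zero {s d : Pt r} (g : Pt r) (hs : ‖s‖ = 1) (hd : ⟪d, s⟫ = 0) :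
    ⟪d, g⟫ ^ 2 ≤ ‖d‖ ^ 2 * (‖g‖ ^ 2 - ⟪s, g⟫ ^ 2) := by
  have hproj : ‖g - ⟪s, g⟫ • s‖ ^ 2 = ‖g‖ ^ 2 - ⟪s, g⟫ ^ 2 := by
    rw [norm_sub_sq_real, norm_smul, real_inner_smul_right, hs, Real.norm_eq_abs, mul_one, sq_abs,
      real_inner_comm s g]
    ring
  have hdg : ⟪d, g⟫ = ⟪d, g - ⟪s, g⟫ • s⟫ := by
    rw [inner_sub_right, real_inner_smul_right, hd, mul_zero, sub_zero]
  rw [← hproj, hdg, ← mul_pow, ← sq_abs]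
  exact pow_le_pow_left₀ (abs_nonneg _) (abs_real_inner_le_norm _ _) 2

theorem sq_sum_inner_gvec_le {A : Matrix (Fin n) (Fin n) ℝ} {σ d : Conf n r} (hσ : inM σ)
    (hd : tangent σ d) :
    2 * (∑ i, ⟪d i, gvec A σ i⟫) ^ 2 ≤ fnormSq d * gradNormSq A σ := by
  have hproj : ∀ i, 0 ≤ ‖gvec A σ i‖ ^ 2 - ⟪σ i, gvec A σ i⟫ ^ 2 := fun i => by
    rw [sub_nonneg, sq_le_sq, abs_norm]
    simpa [hσ i] using abs_real_inner_le_norm (σ i) (gvec A σ i)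
  have hcs := sum_sq_le_sum_mul_sum_of_sq_le_mul univ (fun i _ => sq_nonneg ‖d i‖)
    (fun i _ => hproj i) (fun i _ => sq_inner_le_of_inner_eq_zero (gvec A σ i) (hσ i) (hd i))
  rw [fnormSq, gradNormSq]
  linarith

theorem stationary.gvec_eq {A : Matrix (Fin n) (Fin n) ℝ} {σ : Conf n r}
    (hstat : stationary A σ) (i : Fin n) : gvec A σ i = ‖gvec A σ i‖ • σ i := by
  obtain ⟨hne, heq⟩ := hstat i
  conv_rhs => rw [heq, smul_smul, mul_inv_cancel₀ (norm_ne_zero_iff.mpr hne), one_smul]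

theorem pairing_stationary {A : Matrix (Fin n) (Fin n) ℝ} (hdiag : ∀ i, A i i = 0)
    {σ : Conf n r} (hstat : stationary A σ) (p : Conf n r) :
    pairing A p σ = ∑ i, ‖gvec A σ i‖ * ⟪p i, σ i⟫ := by
  rw [← sum_inner_gvec hdiag]
  exact sum_congr rfl fun i _ => by rw [← real_inner_smul_right, ← hstat.gvec_eq i]

theorem Hform_stationary {A : Matrix (Fin n) (Fin n) ℝ} (hdiag : ∀ i, A i i = 0)
    {σ : Conf n r} (hσ : inM σ) (hstat : stationary A σ) (u : Conf n r) :
    Hform A σ u = 2 * (pairing A u u - ∑ i, ‖u i‖ ^ 2 * ‖gvec A σ i‖) := by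
  have hσg : ∀ i, ⟪σ i, gvec A σ i⟫ = ‖gvec A σ i‖ := fun i => by
    conv_lhs => rw [hstat.gvec_eq i, real_inner_smul_right, real_inner_self_eq_norm_sq, hσ i]
    ring
  simp only [Hform, hσg, sum_sub_distrib, sum_inner_gvec hdiag]

theorem norm_gvec_le_Anorm1 {A : Matrix (Fin n) (Fin n) ℝ} (hA : A.IsSymm) {σ : Conf n r}
    (hσ : inM σ) (i : Fin n) : ‖gvec A σ i‖ ≤ Anorm1 A := by
  have := norm_gvec_le A σ i
  simp only [hσ _, mul_one] at this
  exact this.trans (sum_abs_le_Anorm1 hA i)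

section UnitDirection

variable {u : Conf n r}

theorem norm_le_one_of_fnormSq_eq_one (hu : fnormSq u = 1) (i : Fin n) : ‖u i‖ ≤ 1 := by
  have : ‖u i‖ ^ 2 ≤ 1 :=
    hu ▸ single_le_sum (f := fun j => ‖u j‖ ^ 2) (fun j _ => sq_nonneg _) (mem_univ i)
  nlinarith [norm_nonneg (u i)]

theorem sum_norm_sq_mul (hu : fnormSq u = 1) (c : ℝ) : ∑ i, ‖u i‖ ^ 2 * c = c := by
  rw [← sum_mul, show ∑ i, ‖u i‖ ^ 2 = 1 from hu, one_mul]

variable {σ : Conf n r} {t : ℝ}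

theorem sum_norm_geo_sub_le (hσ : inM σ) (hu : fnormSq u = 1) (ht0 : 0 ≤ t) (ht1 : t ≤ 1) :
    ∑ i, ‖geo σ u t i - σ i - t • u i‖ ≤ t ^ 2 :=
  (sum_le_sum fun i _ => norm_geo_sub_le hσ i (norm_le_one_of_fnormSq_eq_one hu i) ht0 ht1).trans
    (sum_norm_sq_mul hu _).le

theorem sum_norm_geoVel_sub_le (hσ : inM σ) (hu : fnormSq u = 1) (ht0 : 0 ≤ t) (ht1 : t ≤ 1) :
    ∑ i, ‖geoVel σ u t i - u i‖ ≤ 2 * t := by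
  refine (sum_le_sum fun i _ =>
    norm_geoVel_sub_le hσ i (norm_le_one_of_fnormSq_eq_one hu i) ht0 ht1).trans (le_of_eq ?_)
  simp_rw [mul_comm 2 (‖_‖ ^ 2), mul_assoc]
  exact sum_norm_sq_mul hu _

end UnitDirection

section Expansion

variable {A : Matrix (Fin n) (Fin n) ℝ} {σ u : Conf n r}

theorem fval_geo (hA : A.IsSymm) (hdiag : ∀ i, A i i = 0) (hσ : inM σ)
    (hstat : stationary A σ) (hu : tangent σ u) (t : ℝ) :
    fval A (geo σ u t) = fval A σ + t ^ 2 * pairing A u u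
      + 2 * ∑ i, ‖gvec A σ i‖ * (cos (‖u i‖ * t) - 1)
      + 2 * t * pairing A (geo σ u t - σ - t • u) u
      + pairing A (geo σ u t - σ - t • u) (geo σ u t - σ - t • u) := by
  set w := geo σ u t - σ - t • u with hw
  have hgeo : geo σ u t = σ + t • u + w := by rw [hw]; abel
  have huσ : pairing A u σ = 0 := by simp [pairing_stationary hdiag hstat, hu _]
  have hwσ : pairing A w σ = ∑ i, ‖gvec A σ i‖ * (cos (‖u i‖ * t) - 1) := by
    simp only [pairing_stationary hdiag hstat, hw, Pi.sub_apply, Pi.smul_apply,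
      inner_geo_sub_self hσ hu]
  rw [fval_eq_pairing, fval_eq_pairing, hgeo]
  simp only [map_add, map_smul, LinearMap.add_apply, LinearMap.smul_apply, smul_eq_mul]
  rw [pairing_comm hA σ u, pairing_comm hA σ w, pairing_comm hA u w, huσ, hwσ]
  ring

theorem sum_inner_geoVel_gvec (hA : A.IsSymm) (hdiag : ∀ i, A i i = 0) (hσ : inM σ)
    (hstat : stationary A σ) (hu : tangent σ u) (t : ℝ) :
    ∑ i, ⟪geoVel σ u t i, gvec A (geo σ u t) i⟫
      = t * (pairing A u u - ∑ i, ‖u i‖ ^ 2 * ‖gvec A σ i‖)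
        + ∑ i, ‖gvec A σ i‖ * (‖u i‖ * (‖u i‖ * t - sin (‖u i‖ * t)))
        + t * pairing A (geoVel σ u t - u) u
        + pairing A (geo σ u t - σ - t • u) (geoVel σ u t) := by
  set w := geo σ u t - σ - t • u with hw
  set d := geoVel σ u t with hd
  have hgeo : geo σ u t = σ + t • u + w := by rw [hw]; abel
  have hdσ : pairing A d σ = -∑ i, ‖gvec A σ i‖ * (‖u i‖ * sin (‖u i‖ * t)) := by
    simp only [pairing_stationary hdiag hstat, hd, inner_geoVel_self hσ hu, mul_neg,
      sum_neg_distrib]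
  have hsplit : ∑ i, ‖gvec A σ i‖ * (‖u i‖ * (‖u i‖ * t - sin (‖u i‖ * t)))
      = t * ∑ i, ‖u i‖ ^ 2 * ‖gvec A σ i‖ - ∑ i, ‖gvec A σ i‖ * (‖u i‖ * sin (‖u i‖ * t)) := by
    rw [mul_sum, ← sum_sub_distrib]
    exact sum_congr rfl fun i _ => by ring
  rw [sum_inner_gvec hdiag, hgeo, hsplit]
  simp only [map_add, map_smul, map_sub, LinearMap.sub_apply, smul_eq_mul]
  rw [pairing_comm hA w d, hdσ]
  ring

theorem fval_sub_fval_geo_le (hA : A.IsSymm) (hdiag : ∀ i, A i i = 0) (hσ : inM σ)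
    (hstat : stationary A σ) (hu : tangent σ u) (hun : fnormSq u = 1) {t : ℝ} (ht0 : 0 ≤ t)
    (ht1 : t ≤ 1) :
    fval A σ - fval A (geo σ u t) ≤ t ^ 2 * (-Hform A σ u / 2) + 3 * Anorm1 A * t ^ 3 := by
  set a := Anorm1 A
  have ha : 0 ≤ a := Anorm1_nonneg A
  have hw := sum_norm_geo_sub_le hσ hun ht0 ht1
  have hwu : |pairing A (geo σ u t - σ - t • u) u| ≤ a * t ^ 2 :=
    (abs_pairing_le (sum_abs_le_Anorm1 hA) (norm_le_one_of_fnormSq_eq_one hun)).trans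
      (by simpa using mul_le_mul_of_nonneg_left hw ha)
  have hwmax : ∀ i, ‖geo σ u t i - σ i - t • u i‖ ≤ t ^ 2 := fun i =>
    (single_le_sum (f := fun j => ‖geo σ u t j - σ j - t • u j‖) (fun _ _ => norm_nonneg _)
      (mem_univ i)).trans hw
  have hww : |pairing A (geo σ u t - σ - t • u) (geo σ u t - σ - t • u)| ≤ a * t ^ 3 := by
    have := (abs_pairing_le (p := geo σ u t - σ - t • u) (q := geo σ u t - σ - t • u)
      (sum_abs_le_Anorm1 hA) hwmax).trans
      (mul_le_mul_of_nonneg_left hw (by positivity))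
    nlinarith [pow_le_pow_of_le_one ht0 ht1 (show 3 ≤ 4 by norm_num)]
  -- the second-order cosine term has a sign, as `2 (1 - cos x) ≤ x²`
  have hcos : -(2 * ∑ i, ‖gvec A σ i‖ * (cos (‖u i‖ * t) - 1))
      ≤ t ^ 2 * ∑ i, ‖u i‖ ^ 2 * ‖gvec A σ i‖ := by
    rw [mul_sum, mul_sum, ← sum_neg_distrib]
    refine sum_le_sum fun i _ => ?_
    nlinarith [one_sub_sq_div_two_le_cos (x := ‖u i‖ * t), norm_nonneg (gvec A σ i)]
  rw [fval_geo hA hdiag hσ hstat hu, Hform_stationary hdiag hσ hstat]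
  nlinarith [abs_le.mp hwu, abs_le.mp hww]

theorem abs_sum_inner_geoVel_gvec_add_le (hA : A.IsSymm) (hdiag : ∀ i, A i i = 0)
    (hσ : inM σ) (hstat : stationary A σ) (hu : tangent σ u) (hun : fnormSq u = 1) {t : ℝ}
    (ht0 : 0 ≤ t) (ht1 : t ≤ 1) :
    |∑ i, ⟪geoVel σ u t i, gvec A (geo σ u t) i⟫ + t * (-Hform A σ u / 2)|
      ≤ 4 * Anorm1 A * t ^ 2 := by
  set a := Anorm1 A
  have ha : 0 ≤ a := Anorm1_nonneg A
  have hθ := norm_le_one_of_fnormSq_eq_one hun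
  have hsin : |∑ i, ‖gvec A σ i‖ * (‖u i‖ * (‖u i‖ * t - sin (‖u i‖ * t)))| ≤ a * t ^ 2 := by
    refine (abs_sum_le_sum_abs _ _).trans
      ((sum_le_sum fun i _ => ?_).trans (sum_norm_sq_mul hun _).le)
    have hx0 : 0 ≤ ‖u i‖ * t := by positivity
    have hx1 : ‖u i‖ * t ≤ 1 := mul_le_one₀ (hθ i) ht0 ht1
    have hsub0 : 0 ≤ ‖u i‖ * t - sin (‖u i‖ * t) := by linarith [sin_le hx0]
    have hsub : ‖u i‖ * t - sin (‖u i‖ * t) ≤ (‖u i‖ * t) ^ 2 := by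
      nlinarith [sin_ge_sub_cube hx0, pow_le_pow_of_le_one hx0 hx1 (show 2 ≤ 3 by norm_num)]
    rw [abs_of_nonneg (by positivity)]
    calc ‖gvec A σ i‖ * (‖u i‖ * (‖u i‖ * t - sin (‖u i‖ * t)))
        ≤ a * (‖u i‖ * (‖u i‖ * t) ^ 2) := by
          gcongr
          exact norm_gvec_le_Anorm1 hA hσ i
      _ = ‖u i‖ * (‖u i‖ ^ 2 * (a * t ^ 2)) := by ring
      _ ≤ ‖u i‖ ^ 2 * (a * t ^ 2) :=
          mul_le_of_le_one_left (by positivity) (hθ i)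
  have hδ : |t * pairing A (geoVel σ u t - u) u| ≤ 2 * a * t ^ 2 := by
    rw [abs_mul, abs_of_nonneg ht0]
    have := (abs_pairing_le (p := geoVel σ u t - u) (sum_abs_le_Anorm1 hA) hθ).trans
      (mul_le_mul_of_nonneg_left (sum_norm_geoVel_sub_le hσ hun ht0 ht1) (by positivity))
    nlinarith
  have hw : |pairing A (geo σ u t - σ - t • u) (geoVel σ u t)| ≤ a * t ^ 2 := by
    have := (abs_pairing_le (p := geo σ u t - σ - t • u) (sum_abs_le_Anorm1 hA)
      fun i => (norm_geoVel hσ hu t i).trans_le (hθ i)).trans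
      (mul_le_mul_of_nonneg_left (sum_norm_geo_sub_le hσ hun ht0 ht1) (by positivity))
    linarith
  rw [sum_inner_geoVel_gvec hA hdiag hσ hstat hu, Hform_stationary hdiag hσ hstat]
  refine (abs_le.mpr ⟨?_, ?_⟩) <;> linarith [abs_le.mp hsin, abs_le.mp hδ, abs_le.mp hw]

theorem neg_Hform_div_two_le (hA : A.IsSymm) (hdiag : ∀ i, A i i = 0) (hσ : inM σ)
    (hstat : stationary A σ) (hun : fnormSq u = 1) :
    -Hform A σ u / 2 ≤ (n + 1) * Anorm1 A := by
  have ha : 0 ≤ Anorm1 A := Anorm1_nonneg A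
  have hθ := norm_le_one_of_fnormSq_eq_one hun
  have hg : ∑ i, ‖u i‖ ^ 2 * ‖gvec A σ i‖ ≤ Anorm1 A :=
    (sum_le_sum fun i _ => mul_le_mul_of_nonneg_left (norm_gvec_le_Anorm1 hA hσ i)
      (sq_nonneg _)).trans (sum_norm_sq_mul hun _).le
  have hsum : ∑ i, ‖u i‖ ≤ n := by
    simpa using sum_le_card_nsmul univ (fun i => ‖u i‖) 1 fun i _ => hθ i
  have huu := (abs_pairing_le (p := u) (sum_abs_le_Anorm1 hA) hθ).trans
    (mul_le_mul_of_nonneg_left hsum (by positivity))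
  rw [Hform_stationary hdiag hσ hstat]
  linarith [neg_abs_le (pairing A u u)]

end Expansion

theorem gap_le_grad_of_estimates {n a μ b t gap S grad : ℝ} (hn : 1 ≤ n) (ha : 0 ≤ a) (hμ : 0 < μ)
    (ht0 : 0 ≤ t) (hμb : μ ≤ 2 * b) (hba : b ≤ (n + 1) * a)
    (hgap : gap ≤ t ^ 2 * b + 3 * a * t ^ 3) (hS : |S + t * b| ≤ 4 * a * t ^ 2)
    (hgrad : 2 * S ^ 2 ≤ grad) :
    μ / n * gap - t ^ 3 * a * (3 * μ + 88 * n * a) ≤ grad := by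
  have hb : 0 < b := by linarith
  have hleft : μ / n * gap ≤ 2 * t ^ 2 * b ^ 2 + 3 * μ * a * t ^ 3 := by
    calc μ / n * gap ≤ μ * (t ^ 2 * b + 3 * a * t ^ 3) :=
          (mul_le_mul_of_nonneg_left hgap (by positivity)).trans
            (mul_le_mul_of_nonneg_right (div_le_self hμ.le hn) (by positivity))
      _ ≤ 2 * t ^ 2 * b ^ 2 + 3 * μ * a * t ^ 3 := by
          nlinarith [mul_le_mul_of_nonneg_right hμb (by positivity : 0 ≤ t ^ 2 * b)]
  have hright : 2 * t ^ 2 * b ^ 2 - 32 * n * a ^ 2 * t ^ 3 ≤ grad := by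
    obtain ⟨hS1, hS2⟩ := abs_le.mp hS
    have hcross : 2 * t ^ 2 * b ^ 2 - 16 * a * b * t ^ 3 ≤ 2 * S ^ 2 := by
      nlinarith [sq_nonneg (S + t * b), mul_nonneg (mul_nonneg ht0 hb.le) (sub_nonneg.mpr hS2),
        mul_nonneg (mul_nonneg ht0 hb.le) (neg_le_iff_add_nonneg.mp hS1)]
    nlinarith [mul_le_mul_of_nonneg_left hba (by positivity : 0 ≤ 16 * a * t ^ 3),
      mul_le_mul_of_nonneg_right (by linarith : n + 1 ≤ 2 * n) (by positivity : 0 ≤ a ^ 2 * t ^ 3)]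
  nlinarith [mul_nonneg (mul_nonneg ha ha) (pow_nonneg ht0 3)]

theorem gradient_dominates_gap_general {n r : ℕ} (hn : 0 < n)
    (A : Matrix (Fin n) (Fin n) ℝ) (hA : A.IsSymm) (hdiag : ∀ i, A i i = 0)
    (σb : Conf n r) (hσb : inM σb) (hstat : stationary A σb)
    (μ : ℝ) (hμ : 0 < μ) (hqd : quadDecay A σb μ)
    (u : Conf n r) (hu : tangent σb u) (hun : fnormSq u = 1) (hperp : perpV σb u)
    (t : ℝ) (ht0 : 0 ≤ t) (ht1 : t ≤ 1) :
    μ / n * (fval A σb - fval A (geo σb u t))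
      - t ^ 3 * Anorm1 A * (3 * μ + 88 * n * Anorm1 A)
      ≤ gradNormSq A (geo σb u t) := by
  have hμb : μ ≤ 2 * (-Hform A σb u / 2) := by
    have := hqd u hu hperp
    rw [hun, mul_one] at this
    linarith
  have hgrad := sq_sum_inner_gvec_le (A := A) (inM_geo hσb hu t) (tangent_geoVel hσb hu t)
  rw [fnormSq_geoVel hσb hu, hun, one_mul] at hgrad
  exact gap_le_grad_of_estimates (by exact_mod_cast hn) (Anorm1_nonneg A) hμ ht0 hμb
    (neg_Hform_div_two_le hA hdiag hσb hstat hun)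
    (fval_sub_fval_geo_le hA hdiag hσb hstat hu hun ht0 ht1)
    (abs_sum_inner_geoVel_gvec_add_le hA hdiag hσb hstat hu hun ht0 ht1) hgrad

/-- near a stationary point with quadratic decay, the squared
gradient norm dominates the optimality gap up to a cubic error. -/
theorem gradient_dominates_gap {n r : ℕ} (hn : 0 < n) (hr : 0 < r)
    (A : Matrix (Fin n) (Fin n) ℝ) (hA : A.IsSymm) (hdiag : ∀ i, A i i = 0)
    (σb : Conf n r) (hσb : inM σb) (hstat : stationary A σb)
    (μ : ℝ) (hμ : 0 < μ) (hqd : quadDecay A σb μ)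
    (u : Conf n r) (hu : tangent σb u) (hun : fnormSq u = 1) (hperp : perpV σb u)
    (t : ℝ) (ht0 : 0 ≤ t) (ht1 : t ≤ 1) :
    μ / n * (fval A σb - fval A (geo σb u t))
      - t ^ 3 * Anorm1 A * (3 * μ + 88 * n * Anorm1 A)
      ≤ gradNormSq A (geo σb u t) :=
  gradient_dominates_gap_general hn A hA hdiag σb hσb hstat μ hμ hqd u hu hun hperp t ht0 ht1
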